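/- In the augmented SAT-to-vertex-cover reduction where each literal l additionally has two auxiliary nodes l' and l'' (with an edge l–l' present exactly when the unit clause l is in F): adding the edge between nodes l and l' yields a graph having a vertex cover of size n + m − r if and only if F ∪ {l} is satisfiable. -/

import Mathlib

abbrev Var := ℕ
abbrev Lit := Var × Bool
abbrev ClauseF := Finset Lit

/-- Nodes of the augmented SAT-to-vertex-cover reduction graph: a variable-gadget node
for each literal `l`, an occurrence node for each occurrence of a literal in a clause,
and two auxiliary nodes `l'` and `l''` for each literal `l`. -/
inductive NodeA
  | lit : Lit → NodeA
  | occ : ClauseF → Lit → NodeA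
  | aux1 : Lit → NodeA
  | aux2 : Lit → NodeA
deriving DecidableEq

/-- `S` is a vertex cover of the augmented reduction graph of the CNF `F` over
variables `V`: variable-gadget edges, clause-clique and occurrence edges for non-unit
clauses, and an edge `l–l'` for each unit clause `l ∈ F`, all have an endpoint in `S`. -/
def IsCoverA (V : Finset Var) (F : Finset ClauseF) (S : Finset NodeA) : Prop :=
  (∀ x ∈ V, NodeA.lit (x, true) ∈ S ∨ NodeA.lit (x, false) ∈ S) ∧
  (∀ γ ∈ F, 1 < γ.card →
    (∀ l ∈ γ, ∀ l' ∈ γ, l ≠ l' → NodeA.occ γ l ∈ S ∨ NodeA.occ γ l' ∈ S) ∧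
    (∀ l ∈ γ, NodeA.occ γ l ∈ S ∨ NodeA.lit l ∈ S)) ∧
  (∀ l : Lit, ({l} : ClauseF) ∈ F → NodeA.lit l ∈ S ∨ NodeA.aux1 l ∈ S)

/-- Satisfiability of a CNF given as a finite set of clauses. -/
def FSat (F : Finset ClauseF) : Prop :=
  ∃ I : Var → Bool, ∀ γ ∈ F, ∃ l ∈ γ, I l.1 = l.2

/-!
Every vertex cover takes a node from each variable pair and all but one occurrence node of each
clause clique, hence at least `n + ∑ (|γ| - 1)` nodes, which is `n + m - r` when no clause is
empty. A cover of exactly that size is tight on every gadget: it avoids all nodes `l'`, takes one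
literal per variable (an assignment), and for each clause omits an occurrence node whose literal
is then taken; the edge `l₀–l₀'` forces `l₀` as well. Conversely, a satisfying assignment with a
chosen true literal per clause yields a cover of that size. An empty clause makes both sides
false.
-/

open Finset

abbrev Gadget := Var ⊕ ClauseF ⊕ Lit

/-- The gadget containing a node: the pair `(x, true), (x, false)` of a variable, the clique of a
clause, or the pair `l', l''` of a literal. -/
def NodeA.gadget : NodeA → Gadget
  | .lit l => .inl l.1
  | .occ γ _ => .inr (.inl γ)
  | .aux1 l => .inr (.inr l)
  | .aux2 l => .inr (.inr l)

def Gadget.minCover : Gadget → ℕ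
  | .inl _ => 1
  | .inr (.inl γ) => #γ - 1
  | .inr (.inr _) => 0

def coverCount (S : Finset NodeA) (b : Gadget) : ℕ := #{a ∈ S | a.gadget = b}

def gadgets (V : Finset Var) (F : Finset ClauseF) (L : Finset Lit) : Finset Gadget :=
  V.disjSum (F.disjSum L)

lemma sum_minCover_gadgets (V : Finset Var) (F : Finset ClauseF) (L : Finset Lit) :
    ∑ b ∈ gadgets V F L, b.minCover = #V + ∑ γ ∈ F, (#γ - 1) := by
  simp [gadgets, sum_disjSum, Gadget.minCover]

lemma sum_coverCount_le_card (S : Finset NodeA) (t : Finset Gadget) :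
    ∑ b ∈ t, coverCount S b ≤ #S := by
  simp only [coverCount, sum_card_fiberwise_eq_card_filter]
  exact card_filter_le _ _

lemma card_filter_occ_mem_le_coverCount (S : Finset NodeA) (γ : ClauseF) :
    #{l ∈ γ | NodeA.occ γ l ∈ S} ≤ coverCount S (.inr (.inl γ)) :=
  card_le_card_of_injOn (NodeA.occ γ)
    (fun _ hl => mem_filter.2 ⟨(mem_filter.1 hl).2, rfl⟩)
    (fun _ _ _ _ h => by injection h)

section Cover

variable {V : Finset Var} {F : Finset ClauseF} {S : Finset NodeA}

/-- The clause clique leaves at most one occurrence node uncovered. -/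
lemma IsCoverA.card_sub_one_le_card_filter_occ_mem (hS : IsCoverA V F S) {γ : ClauseF}
    (hγ : γ ∈ F) : #γ - 1 ≤ #{l ∈ γ | NodeA.occ γ l ∈ S} := by
  have hmissing : #{l ∈ γ | NodeA.occ γ l ∉ S} ≤ 1 := by
    by_cases hγ1 : 1 < #γ
    · refine card_le_one.2 fun l hl l' hl' => ?_
      rw [mem_filter] at hl hl'
      by_contra hne
      exact ((hS.2.1 γ hγ hγ1).1 l hl.1 l' hl'.1 hne).elim hl.2 hl'.2
    · exact (card_filter_le _ _).trans (not_lt.1 hγ1)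
  have := card_filter_add_card_filter_not (s := γ) (fun l => NodeA.occ γ l ∈ S)
  omega

lemma IsCoverA.minCover_le_coverCount (hS : IsCoverA V F S) {L : Finset Lit} {b : Gadget}
    (hb : b ∈ gadgets V F L) : b.minCover ≤ coverCount S b := by
  rcases b with x | γ | l
  · have hx : x ∈ V := by simpa [gadgets] using hb
    refine card_pos.2 ?_
    rcases hS.1 x hx with h | h
    exacts [⟨_, mem_filter.2 ⟨h, rfl⟩⟩, ⟨_, mem_filter.2 ⟨h, rfl⟩⟩]
  · have hγ : γ ∈ F := by simpa [gadgets] using hb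
    exact (hS.card_sub_one_le_card_filter_occ_mem hγ).trans
      (card_filter_occ_mem_le_coverCount S γ)
  · exact Nat.zero_le _

lemma IsCoverA.le_card (hS : IsCoverA V F S) : #V + ∑ γ ∈ F, (#γ - 1) ≤ #S := by
  rw [← sum_minCover_gadgets V F ∅]
  exact (sum_le_sum fun _ hb => hS.minCover_le_coverCount hb).trans
    (sum_coverCount_le_card S _)

lemma IsCoverA.coverCount_eq_minCover (hS : IsCoverA V F S)
    (hcard : #S ≤ #V + ∑ γ ∈ F, (#γ - 1)) {L : Finset Lit} {b : Gadget}
    (hb : b ∈ gadgets V F L) : coverCount S b = b.minCover := by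
  have hle := fun b (hb : b ∈ gadgets V F L) => hS.minCover_le_coverCount hb
  have hsum : ∑ b ∈ gadgets V F L, b.minCover = ∑ b ∈ gadgets V F L, coverCount S b := by
    refine le_antisymm (sum_le_sum hle) ?_
    rw [sum_minCover_gadgets]
    exact (sum_coverCount_le_card S _).trans hcard
  exact ((sum_eq_sum_iff_of_le hle).1 hsum b hb).symm

end Cover

def litAssignment (S : Finset NodeA) (x : Var) : Bool := decide (NodeA.lit (x, true) ∈ S)

lemma litAssignment_eq {S : Finset NodeA} {l : Lit} (hcount : coverCount S (.inl l.1) ≤ 1)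
    (hl : NodeA.lit l ∈ S) : litAssignment S l.1 = l.2 := by
  obtain ⟨x, _ | _⟩ := l
  · refine decide_eq_false fun htrue => ?_
    have := card_le_one.1 hcount _ (mem_filter.2 ⟨htrue, rfl⟩) _ (mem_filter.2 ⟨hl, rfl⟩)
    simp at this
  · exact decide_eq_true hl

lemma aux1_not_mem {S : Finset NodeA} {l : Lit} (hcount : coverCount S (.inr (.inr l)) = 0) :
    NodeA.aux1 l ∉ S := fun h =>
  (card_pos.2 ⟨NodeA.aux1 l, mem_filter.2 ⟨h, rfl⟩⟩ : 0 < coverCount S _).ne' hcount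

lemma exists_occ_not_mem {S : Finset NodeA} {γ : ClauseF} (hγ : γ.Nonempty)
    (hcount : coverCount S (.inr (.inl γ)) ≤ #γ - 1) : ∃ l ∈ γ, NodeA.occ γ l ∉ S := by
  by_contra! hall
  have := (card_filter_occ_mem_le_coverCount S γ).trans hcount
  rw [filter_true_of_mem hall] at this
  have := hγ.card_pos
  omega

lemma IsCoverA.fSat_insert {V : Finset Var} {F : Finset ClauseF} {S : Finset NodeA}
    {l₀ : Lit} (hvars : ∀ γ ∈ F, ∀ l ∈ γ, l.1 ∈ V) (hl₀ : l₀.1 ∈ V) (hF : ∅ ∉ F)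
    (hS : IsCoverA V F S) (h₀ : NodeA.lit l₀ ∈ S ∨ NodeA.aux1 l₀ ∈ S)
    (hcard : #S ≤ #V + ∑ γ ∈ F, (#γ - 1)) : FSat (insert {l₀} F) := by
  have tight {L : Finset Lit} {b : Gadget} (hb : b ∈ gadgets V F L) :=
    hS.coverCount_eq_minCover hcard hb
  have haux (l : Lit) : NodeA.aux1 l ∉ S := aux1_not_mem (tight (L := {l}) (by simp [gadgets]))
  have hlit : ∀ γ ∈ insert {l₀} F, ∃ l ∈ γ, NodeA.lit l ∈ S := by
    intro γ hγ
    rcases mem_insert.1 hγ with rfl | hγ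
    · exact ⟨l₀, mem_singleton_self _, h₀.resolve_right (haux l₀)⟩
    have hne : γ.Nonempty := nonempty_iff_ne_empty.2 fun h => hF (h ▸ hγ)
    by_cases hγ1 : 1 < #γ
    · obtain ⟨l, hl, hocc⟩ := exists_occ_not_mem hne
        (tight (L := ∅) (b := .inr (.inl γ)) (by simpa [gadgets] using hγ)).le
      exact ⟨l, hl, ((hS.2.1 γ hγ hγ1).2 l hl).resolve_left hocc⟩
    · obtain ⟨l, rfl⟩ := card_eq_one.1 (le_antisymm (not_lt.1 hγ1) hne.card_pos)
      exact ⟨l, mem_singleton_self l, (hS.2.2 l hγ).resolve_right (haux l)⟩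
  refine ⟨litAssignment S, fun γ hγ => ?_⟩
  obtain ⟨l, hl, hlS⟩ := hlit γ hγ
  have hlV : l.1 ∈ V := by
    rcases mem_insert.1 hγ with rfl | hγ
    · rwa [mem_singleton.1 hl]
    · exact hvars γ hγ l hl
  exact ⟨l, hl, litAssignment_eq (tight (L := ∅) (b := .inl l.1) (by simpa [gadgets])).le hlS⟩

def assignmentCover (V : Finset Var) (F : Finset ClauseF) (I : Var → Bool)
    (w : ClauseF → Lit) : Finset NodeA :=
  V.image (fun x => .lit (x, I x)) ∪ F.biUnion fun γ => (γ.erase (w γ)).image (.occ γ)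

section AssignmentCover

variable {V : Finset Var} {F : Finset ClauseF} {I : Var → Bool} {w : ClauseF → Lit}

lemma lit_mem_assignmentCover {l : Lit} (hl : l.1 ∈ V) (hI : I l.1 = l.2) :
    NodeA.lit l ∈ assignmentCover V F I w :=
  mem_union_left _ (mem_image.2 ⟨l.1, hl, by rw [hI]⟩)

lemma occ_mem_assignmentCover {γ : ClauseF} {l : Lit} (hγ : γ ∈ F) (hl : l ∈ γ)
    (hw : l ≠ w γ) : NodeA.occ γ l ∈ assignmentCover V F I w :=
  mem_union_right _ (mem_biUnion.2 ⟨γ, hγ, mem_image_of_mem _ (mem_erase.2 ⟨hw, hl⟩)⟩)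

lemma isCoverA_assignmentCover (hvars : ∀ γ ∈ F, ∀ l ∈ γ, l.1 ∈ V)
    (hw : ∀ γ ∈ F, w γ ∈ γ ∧ I (w γ).1 = (w γ).2) : IsCoverA V F (assignmentCover V F I w) := by
  refine ⟨fun x hx => ?_, fun γ hγ _ => ⟨fun l hl l' hl' hne => ?_, fun l hl => ?_⟩,
    fun l hl => ?_⟩
  · cases hIx : I x
    · exact .inr (lit_mem_assignmentCover hx hIx)
    · exact .inl (lit_mem_assignmentCover hx hIx)
  · by_cases hlw : l = w γ
    · exact .inr (occ_mem_assignmentCover hγ hl' (hlw ▸ Ne.symm hne))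
    · exact .inl (occ_mem_assignmentCover hγ hl hlw)
  · by_cases hlw : l = w γ
    · subst hlw
      exact .inr (lit_mem_assignmentCover (hvars γ hγ _ hl) (hw γ hγ).2)
    · exact .inl (occ_mem_assignmentCover hγ hl hlw)
  · have hwl : w {l} = l := mem_singleton.1 (hw _ hl).1
    refine .inl (lit_mem_assignmentCover (hvars _ hl l (mem_singleton_self l)) ?_)
    simpa [hwl] using (hw _ hl).2

lemma card_assignmentCover_le (hw : ∀ γ ∈ F, w γ ∈ γ) :
    #(assignmentCover V F I w) ≤ #V + ∑ γ ∈ F, (#γ - 1) := by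
  refine (card_union_le _ _).trans (add_le_add card_image_le (card_biUnion_le.trans ?_))
  refine sum_le_sum fun γ hγ => card_image_le.trans ?_
  rw [card_erase_of_mem (hw γ hγ)]

end AssignmentCover

section ClauseSizes

variable {α : Type*} {F : Finset (Finset α)}

lemma sum_card_sub_one_add_card (hF : ∅ ∉ F) : ∑ γ ∈ F, (#γ - 1) + #F = ∑ γ ∈ F, #γ := by
  rw [card_eq_sum_ones, ← sum_add_distrib]
  refine sum_congr rfl fun γ hγ => Nat.sub_add_cancel (card_pos.2 ?_)
  exact nonempty_iff_ne_empty.2 fun h => hF (h ▸ hγ)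

lemma sum_card_lt_sum_card_sub_one_add_card (hF : ∅ ∈ F) :
    ∑ γ ∈ F, #γ < ∑ γ ∈ F, (#γ - 1) + #F := by
  rw [card_eq_sum_ones, ← sum_add_distrib]
  exact sum_lt_sum (fun _ _ => by omega) ⟨∅, hF, by simp⟩

end ClauseSizes

lemma not_fSat_of_empty_mem {F : Finset ClauseF} (hF : ∅ ∈ F) : ¬ FSat F :=
  fun ⟨_, hI⟩ => by simpa using hI ∅ hF

/-- Adding the edge between the nodes `l₀` and `l₀'` yields a graph having a vertex
cover of size `n + m - r` iff `F ∪ {l₀}` is satisfiable. -/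
theorem stmt11 (V : Finset Var) (F : Finset ClauseF)
    (hvars : ∀ γ ∈ F, ∀ l ∈ γ, l.1 ∈ V) (l₀ : Lit) (hl₀ : l₀.1 ∈ V) :
    (∃ S : Finset NodeA, IsCoverA V F S ∧
        (NodeA.lit l₀ ∈ S ∨ NodeA.aux1 l₀ ∈ S) ∧
        S.card = V.card + (∑ γ ∈ F, γ.card) - F.card) ↔
      FSat (insert {l₀} F) := by
  have hV : 0 < #V := card_pos.2 ⟨_, hl₀⟩
  by_cases hF : ∅ ∈ F
  · refine iff_of_false ?_ (not_fSat_of_empty_mem (mem_insert_of_mem hF))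
    rintro ⟨S, hS, -, hcard⟩
    have := hS.le_card
    have : ∑ γ ∈ F, #γ < ∑ γ ∈ F, (#γ - 1) + #F := sum_card_lt_sum_card_sub_one_add_card hF
    omega
  have hm : #V + ∑ γ ∈ F, #γ - #F = #V + ∑ γ ∈ F, (#γ - 1) := by
    have : ∑ γ ∈ F, (#γ - 1) + #F = ∑ γ ∈ F, #γ := sum_card_sub_one_add_card hF
    omega
  rw [hm]
  constructor
  · rintro ⟨S, hS, h₀, hcard⟩
    exact hS.fSat_insert hvars hl₀ hF h₀ hcard.le
  · rintro ⟨I, hI⟩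
    choose! w hw using fun γ hγ => hI γ (mem_insert_of_mem hγ)
    obtain ⟨l, hl, hIl⟩ := hI {l₀} (mem_insert_self _ _)
    rw [mem_singleton.1 hl] at hIl
    have hS := isCoverA_assignmentCover hvars hw (V := V)
    exact ⟨_, hS, .inl (lit_mem_assignmentCover hl₀ hIl),
      le_antisymm (card_assignmentCover_le fun γ hγ => (hw γ hγ).1) hS.le_card⟩
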